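/- arXiv:2111.10681 — 2 statements merged into one kernel-verified Lean document; each statement's English description precedes it below -/
import Mathlib

section
/- Let w be a permutation of {1,…,n} and 1 ≤ i ≤ n. Then r_i(w) = ℓ_i(w) if and only if there are no indices j, k with i < j < k and w(i) < w(k) < w(j) (i.e. no 132-pattern starting at position i). In particular, raj(w) = inv(w) if and only if w is dominant. -/
open scoped Classical

noncomputable section

namespace RajRegularity

variable {n : ℕ}

/-- Maximal length of an increasing subsequence of `w(i), …, w(n)` beginning with `w(i)`:
the largest cardinality of a set `s` of positions that contains `i`, consists of positions
`≥ i`, and on which `w` is strictly increasing. -/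
def lisFrom (w : Equiv.Perm (Fin n)) (i : Fin n) : ℕ :=
  (Finset.univ.filter fun s : Finset (Fin n) =>
      i ∈ s ∧ (∀ j ∈ s, i ≤ j) ∧ ∀ j ∈ s, ∀ k ∈ s, j < k → w j < w k).sup Finset.card

/-- `rajCode w i = (n − i + 1) −` (maximal length of an increasing subsequence of
`w(i), …, w(n)` beginning with `w(i)`); here positions are 0-based, so the number of
positions `≥ i` is `n - i`. -/
def rajCode (w : Equiv.Perm (Fin n)) (i : Fin n) : ℕ :=
  (n - (i : ℕ)) - lisFrom w i

/-- The Rajchgot index `raj w = Σᵢ rajCode w i`. -/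
def raj (w : Equiv.Perm (Fin n)) : ℕ := ∑ i, rajCode w i

/-- The number of inversions of `w`: pairs of positions `i < j` with `w i > w j`. -/
def invNum (w : Equiv.Perm (Fin n)) : ℕ :=
  (Finset.univ.filter fun p : Fin n × Fin n => p.1 < p.2 ∧ w p.2 < w p.1).card

/-- The `i`-th entry of the inv code: `ℓ_i(w) = #{ j : i < j, w j < w i }`. -/
def ellCode (w : Equiv.Perm (Fin n)) (i : Fin n) : ℕ :=
  (Finset.univ.filter fun j : Fin n => i < j ∧ w j < w i).card

/-- The set of descent positions of `w` (0-based position `j` with `w j > w (j+1)`). -/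
def descents (w : Equiv.Perm (Fin n)) : Finset (Fin n) :=
  Finset.univ.filter fun j : Fin n =>
    if h : (j : ℕ) + 1 < n then w ⟨(j : ℕ) + 1, h⟩ < w j else False

/-- The major index: the sum of the (1-based) descent positions of `w`. -/
def maj (w : Equiv.Perm (Fin n)) : ℕ := ∑ j ∈ descents w, ((j : ℕ) + 1)

/-- `mCode w i`: the number of descents of `w` at positions `≥ i`. -/
def mCode (w : Equiv.Perm (Fin n)) (i : Fin n) : ℕ :=
  ((descents w).filter fun j => i ≤ j).card

/-- `w` is dominant iff it avoids the pattern 132. -/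
def Dominant (w : Equiv.Perm (Fin n)) : Prop :=
  ¬ ∃ i j k : Fin n, i < j ∧ j < k ∧ w i < w k ∧ w k < w j

/-- `w` is fireworks iff there are no positions `i < j` with `w j < w (j+1) < w i`. -/
def Fireworks (w : Equiv.Perm (Fin n)) : Prop :=
  ¬ ∃ (i j : Fin n) (h : (j : ℕ) + 1 < n),
      i < j ∧ w j < w ⟨(j : ℕ) + 1, h⟩ ∧ w ⟨(j : ℕ) + 1, h⟩ < w i

/-- `w` is inverse fireworks iff `w⁻¹` is fireworks. -/
def InvFireworks (w : Equiv.Perm (Fin n)) : Prop := Fireworks w⁻¹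

/-- `w` is a valley permutation: for some `a`, it is strictly decreasing on positions `≤ a`
and strictly increasing on positions `≥ a`. -/
def Valley (w : Equiv.Perm (Fin n)) : Prop :=
  ∃ a : ℕ, (∀ i j : Fin n, i < j → (j : ℕ) ≤ a → w j < w i) ∧
    ∀ i j : Fin n, a ≤ (i : ℕ) → i < j → w i < w j

/-- `eps w i` is the (1-based) blob index `ε_i(w) = i + r_i(w)`. -/
def eps (w : Equiv.Perm (Fin n)) (i : Fin n) : ℕ := (i : ℕ) + 1 + rajCode w i

/-- The shape of `w`: `α_k(w) = #{ i : ε_i(w) = k }` (here `k : Fin n` stands for the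
1-based index `k + 1`). -/
def shape (w : Equiv.Perm (Fin n)) : Fin n → ℕ := fun k =>
  (Finset.univ.filter fun i : Fin n => eps w i = (k : ℕ) + 1).card

/-- Dominance order on shapes: `α ⪰ β` iff every tail sum of `α` is at least the
corresponding tail sum of `β`. -/
def Dominates (α β : Fin n → ℕ) : Prop :=
  ∀ m : Fin n,
    ∑ k ∈ Finset.univ.filter (fun k : Fin n => m ≤ k), β k ≤
      ∑ k ∈ Finset.univ.filter (fun k : Fin n => m ≤ k), α k

/-- Right weak order: `u ≤_R w` iff `w = u * v` length-additively. -/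
def leR (u w : Equiv.Perm (Fin n)) : Prop :=
  ∃ v : Equiv.Perm (Fin n), w = u * v ∧ invNum w = invNum u + invNum v

/-- Left weak order: `u ≤_L w` iff `w = v * u` length-additively. -/
def leL (u w : Equiv.Perm (Fin n)) : Prop :=
  ∃ v : Equiv.Perm (Fin n), w = v * u ∧ invNum w = invNum v + invNum u

/-- Two-sided weak order: the transitive closure of the union of left and right weak
orders (both are reflexive, so we may use the reflexive-transitive closure). -/
def leLR (u w : Equiv.Perm (Fin n)) : Prop :=
  Relation.ReflTransGen (fun a b : Equiv.Perm (Fin n) => leL a b ∨ leR a b) u w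

/-- The maximum of the block of the set partition `π(w)` containing the value `v`;
the block of `v` is `{ v' : ε_{w⁻¹ v'}(w) = ε_{w⁻¹ v}(w) }`. -/
def blockMax (w : Equiv.Perm (Fin n)) (v : Fin n) : ℕ :=
  ((Finset.univ.filter fun v' : Fin n => eps w (w⁻¹ v') = eps w (w⁻¹ v)).max'
      ⟨v, Finset.mem_filter.mpr ⟨Finset.mem_univ v, rfl⟩⟩).val

/-- The fireworks map `Φ`: the one-line word of `Φ w` lists the blocks of `π(w)` in
increasing order of their maxima, each block written in decreasing order.  Equivalently,
`Φ w` sorts the values by the key (max of block, value reversed), lexicographically. -/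
def Phi (w : Equiv.Perm (Fin n)) : Equiv.Perm (Fin n) :=
  Tuple.sort fun v : Fin n => n * blockMax w v + (n - 1 - (v : ℕ))

/-- The inverse fireworks map `Φ_inv w = Φ(w⁻¹)⁻¹`. -/
def PhiInv (w : Equiv.Perm (Fin n)) : Equiv.Perm (Fin n) := (Phi w⁻¹)⁻¹

/-- Partial sums of a sequence of block sizes. -/
def psum (a : ℕ → ℕ) (m : ℕ) : ℕ := ∑ j ∈ Finset.range m, a j

/-- The index of the block (interval `[psum a m, psum a (m+1))`) containing the value `v`. -/
def blockIdx (n : ℕ) (a : ℕ → ℕ) (v : Fin n) : ℕ :=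
  ((Finset.range n).filter fun m => psum a (m + 1) ≤ (v : ℕ)).card

/-- The layered permutation with block sizes `a 0, a 1, …`: it reverses each of the
consecutive intervals `[psum a m, psum a (m+1))` of `{0, …, n-1}`.  Equivalently, its
one-line word sorts the values by (block index, value reversed) lexicographically. -/
def layered (n : ℕ) (a : ℕ → ℕ) : Equiv.Perm (Fin n) :=
  Tuple.sort fun v : Fin n => n * blockIdx n a v + (n - 1 - (v : ℕ))

/-- The layered permutation `e_α` associated to a shape `α : Fin n → ℕ`. -/
def eOf (α : Fin n → ℕ) : Equiv.Perm (Fin n) :=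
  layered n fun m => if h : m < n then α ⟨m, h⟩ else 0

/-- The set of positions `j ≥ i` with `w j ≥ w i`. -/
def Tset (w : Equiv.Perm (Fin n)) (i : Fin n) : Finset (Fin n) :=
  Finset.univ.filter fun j => i ≤ j ∧ w i ≤ w j

lemma mem_Tset_self (w : Equiv.Perm (Fin n)) (i : Fin n) : i ∈ Tset w i := by
  simp [Tset]

lemma Tcard_add_ell (w : Equiv.Perm (Fin n)) (i : Fin n) :
    (Tset w i).card + ellCode w i = n - (i : ℕ) := by
  classical
  have hsplit := Finset.card_filter_add_card_filter_not
    (s := Finset.Ici i) (p := fun j : Fin n => w i ≤ w j)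
  have h1 : (Finset.Ici i).filter (fun j : Fin n => w i ≤ w j) = Tset w i := by
    ext j; simp [Tset, and_comm]
  have h2 : (Finset.Ici i).filter (fun j : Fin n => ¬ w i ≤ w j)
      = Finset.univ.filter fun j : Fin n => i < j ∧ w j < w i := by
    ext j
    simp only [Finset.mem_filter, Finset.mem_Ici, Finset.mem_univ, true_and, not_le]
    constructor
    · rintro ⟨hij, hw⟩
      refine ⟨lt_of_le_of_ne hij ?_, hw⟩
      rintro rfl; exact absurd hw (lt_irrefl _)
    · rintro ⟨hij, hw⟩; exact ⟨le_of_lt hij, hw⟩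
  rw [h1, h2] at hsplit
  rw [Fin.card_Ici] at hsplit
  exact hsplit

lemma subset_Tset {w : Equiv.Perm (Fin n)} {i : Fin n} {s : Finset (Fin n)}
    (h1 : i ∈ s) (h2 : ∀ j ∈ s, i ≤ j)
    (h3 : ∀ j ∈ s, ∀ k ∈ s, j < k → w j < w k) : s ⊆ Tset w i := by
  intro j hj
  simp only [Tset, Finset.mem_filter, Finset.mem_univ, true_and]
  refine ⟨h2 j hj, ?_⟩
  rcases eq_or_lt_of_le (h2 j hj) with h | h
  · subst h; exact le_rfl
  · exact le_of_lt (h3 i h1 j hj h)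

lemma lisFrom_le_Tcard (w : Equiv.Perm (Fin n)) (i : Fin n) :
    lisFrom w i ≤ (Tset w i).card := by
  apply Finset.sup_le
  intro s hs
  simp only [Finset.mem_filter, Finset.mem_univ, true_and] at hs
  exact Finset.card_le_card (subset_Tset hs.1 hs.2.1 hs.2.2)

/-- If there is no 132-pattern starting at `i`, `lisFrom` achieves the full card of `Tset`. -/
lemma lisFrom_eq_of_no132 {w : Equiv.Perm (Fin n)} {i : Fin n}
    (h : ¬ ∃ j k : Fin n, i < j ∧ j < k ∧ w i < w k ∧ w k < w j) :
    lisFrom w i = (Tset w i).card := by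
  refine le_antisymm (lisFrom_le_Tcard w i) ?_
  apply Finset.le_sup (f := Finset.card)
  simp only [Finset.mem_filter, Finset.mem_univ, true_and]
  refine ⟨mem_Tset_self w i, ?_, ?_⟩
  · intro j hj
    simp only [Tset, Finset.mem_filter, Finset.mem_univ, true_and] at hj
    exact hj.1
  · intro j hj k hk hjk
    simp only [Tset, Finset.mem_filter, Finset.mem_univ, true_and] at hj hk
    by_contra hcon
    push_neg at hcon
    have hne : w k ≠ w j := fun he => absurd (w.injective he) (ne_of_gt hjk)
    have hkj : w k < w j := lt_of_le_of_ne hcon hne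
    -- j must be > i strictly, else contradiction
    rcases eq_or_lt_of_le hj.1 with h' | h'
    · subst h'
      exact absurd (lt_of_lt_of_le hkj hk.2) (lt_irrefl _)
    · have hik : w i < w k := by
        rcases eq_or_lt_of_le hk.2 with h'' | h''
        · exact absurd (w.injective h''.symm ▸ rfl : w i = w k)
            (by intro he
                have : i = k := w.injective he
                exact absurd (h'.trans hjk) (this ▸ lt_irrefl _))
        · exact h''
      exact h ⟨j, k, h', hjk, hik, hkj⟩

/-- If there is a 132-pattern starting at `i`, `lisFrom` is strictly below the card of `Tset`. -/
lemma lisFrom_lt_of_132 {w : Equiv.Perm (Fin n)} {i : Fin n}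
    (h : ∃ j k : Fin n, i < j ∧ j < k ∧ w i < w k ∧ w k < w j) :
    lisFrom w i < (Tset w i).card := by
  obtain ⟨j, k, hij, hjk, hik, hkj⟩ := h
  have hjT : j ∈ Tset w i := by
    simp only [Tset, Finset.mem_filter, Finset.mem_univ, true_and]
    exact ⟨le_of_lt hij, le_of_lt (hik.trans hkj)⟩
  have hpos : 0 < (Tset w i).card :=
    Finset.card_pos.mpr ⟨i, mem_Tset_self w i⟩
  unfold lisFrom
  rw [Finset.sup_lt_iff hpos]
  intro s hs
  simp only [Finset.mem_filter, Finset.mem_univ, true_and] at hs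
  have hsub : s ⊆ Tset w i := subset_Tset hs.1 hs.2.1 hs.2.2
  -- s cannot contain both j and k
  have : j ∉ s ∨ k ∉ s := by
    by_contra hcon
    push_neg at hcon
    exact absurd (hs.2.2 j hcon.1 k hcon.2 hjk) (not_lt_of_gt hkj)
  rcases this with hj' | hk'
  · have : s ⊆ (Tset w i).erase j := fun x hx =>
      Finset.mem_erase.mpr ⟨fun he => hj' (he ▸ hx), hsub hx⟩
    calc s.card ≤ ((Tset w i).erase j).card := Finset.card_le_card this
      _ < (Tset w i).card := Finset.card_erase_lt_of_mem hjT
  · have hkT : k ∈ Tset w i := by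
      simp only [Tset, Finset.mem_filter, Finset.mem_univ, true_and]
      exact ⟨le_of_lt (hij.trans hjk), le_of_lt hik⟩
    have : s ⊆ (Tset w i).erase k := fun x hx =>
      Finset.mem_erase.mpr ⟨fun he => hk' (he ▸ hx), hsub hx⟩
    calc s.card ≤ ((Tset w i).erase k).card := Finset.card_le_card this
      _ < (Tset w i).card := Finset.card_erase_lt_of_mem hkT

lemma Tcard_le (w : Equiv.Perm (Fin n)) (i : Fin n) :
    (Tset w i).card ≤ n - (i : ℕ) := by
  have := Tcard_add_ell w i; omega

/-- Pointwise version of the main statement. -/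
lemma rajCode_eq_ellCode_iff (w : Equiv.Perm (Fin n)) (i : Fin n) :
    rajCode w i = ellCode w i ↔
      ¬ ∃ j k : Fin n, i < j ∧ j < k ∧ w i < w k ∧ w k < w j := by
  have hT := Tcard_add_ell w i
  have hle := lisFrom_le_Tcard w i
  constructor
  · intro heq
    intro hpat
    have := lisFrom_lt_of_132 hpat
    unfold rajCode at heq
    omega
  · intro hno
    have := lisFrom_eq_of_no132 hno
    unfold rajCode
    omega

lemma ellCode_le_rajCode (w : Equiv.Perm (Fin n)) (i : Fin n) :
    ellCode w i ≤ rajCode w i := by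
  have hT := Tcard_add_ell w i
  have hle := lisFrom_le_Tcard w i
  unfold rajCode
  omega

lemma invNum_eq_sum_ellCode (w : Equiv.Perm (Fin n)) :
    invNum w = ∑ i, ellCode w i := by
  classical
  unfold invNum
  rw [Finset.card_eq_sum_card_fiberwise
    (f := Prod.fst) (t := Finset.univ) (fun x _ => Finset.mem_univ _)]
  refine Finset.sum_congr rfl fun i _ => ?_
  unfold ellCode
  refine Finset.card_bij (fun p _ => p.2) ?_ ?_ ?_
  · intro p hp
    simp only [Finset.mem_filter, Finset.mem_univ, true_and] at hp ⊢
    obtain ⟨⟨h1, h2⟩, h3⟩ := hp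
    exact ⟨h3 ▸ h1, h3 ▸ h2⟩
  · intro p hp q hq hpq
    simp only [Finset.mem_filter] at hp hq
    exact Prod.ext (hp.2.trans hq.2.symm) hpq
  · intro j hj
    simp only [Finset.mem_filter, Finset.mem_univ, true_and] at hj
    exact ⟨(i, j), by simp [hj.1, hj.2], rfl⟩

/-- `r_i(w) = ℓ_i(w)` iff there is no 132-pattern starting at position `i`;
in particular `raj(w) = inv(w)` iff `w` is dominant. -/
theorem rajCode_eq_ellCode_iff_no_132_from (n : ℕ) (w : Equiv.Perm (Fin n)) (i : Fin n) :
    (rajCode w i = ellCode w i ↔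
      ¬ ∃ j k : Fin n, i < j ∧ j < k ∧ w i < w k ∧ w k < w j) ∧
    (raj w = invNum w ↔ Dominant w) := by
  refine ⟨rajCode_eq_ellCode_iff w i, ?_⟩
  rw [raj, invNum_eq_sum_ellCode]
  constructor
  · intro hsum
    have hall : ∀ j ∈ Finset.univ, ellCode w j = rajCode w j :=
      (Finset.sum_eq_sum_iff_of_le (fun j _ => ellCode_le_rajCode w j)).mp hsum.symm
    rintro ⟨a, b, c, hab, hbc, h1, h2⟩
    exact (rajCode_eq_ellCode_iff w a).mp (hall a (Finset.mem_univ a)).symm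
      ⟨b, c, hab, hbc, h1, h2⟩
  · intro hdom
    refine Finset.sum_congr rfl fun j _ => ?_
    refine (rajCode_eq_ellCode_iff w j).mpr ?_
    rintro ⟨b, c, hjb, hbc, h1, h2⟩
    exact hdom ⟨j, b, c, hjb, hbc, h1, h2⟩

end RajRegularity
end
end

section
/- Let α = (α_1,…,α_n) be a sequence of nonnegative integers summing to n whose support is an upper interval, i.e. for some t one has α_k ≥ 1 exactly when t ≤ k ≤ n. Then there is exactly one valley permutation f_α of {1,…,n} whose shape equals α, and exactly one inverse valley permutation of shape α, namely f_α⁻¹. -/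
open scoped Classical

noncomputable section

namespace RajRegularity

variable {n : ℕ}

/-!
For every permutation `w`, an increasing subsequence of `w` starting at position `i` is a chain of
points of its graph; transposing the graph turns it into one of `w⁻¹` starting at position `w i`.
Together with `eps w i + lisFrom w i = n + 1` this gives `shape w⁻¹ = shape w`.

A valley permutation lists a set of values in decreasing order and then the complementary set `E`
in increasing order. The longest increasing subsequence starting at a value `v` is `v` followed by
the elements of `E` above `v`, so `shape w k` counts the values having exactly `n - 1 - k` elements
of `E` above them. This count is antitone in `v`, so the shape determines it, and it determines
`E` up to the value `0`, hence `w`. Conversely, for a shape `α` supported on an upper interval, the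
partial sums `α 0 + ⋯ + α (j - 1)` form a set `E` whose count has as fibres the consecutive blocks
of sizes `α 0, α 1, …`.
-/

open Finset

def IncreasingFrom (w : Equiv.Perm (Fin n)) (i : Fin n) (s : Finset (Fin n)) : Prop :=
  i ∈ s ∧ (∀ j ∈ s, i ≤ j) ∧ ∀ j ∈ s, ∀ k ∈ s, j < k → w j < w k

section LisFrom

variable {w : Equiv.Perm (Fin n)} {i : Fin n}

theorem card_le_lisFrom {s : Finset (Fin n)} (hs : IncreasingFrom w i s) : #s ≤ lisFrom w i :=
  le_sup (f := card) (mem_filter.mpr ⟨mem_univ s, hs⟩)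

theorem lisFrom_le {N : ℕ} (h : ∀ s, IncreasingFrom w i s → #s ≤ N) : lisFrom w i ≤ N :=
  Finset.sup_le fun s hs => h s (mem_filter.mp hs).2

theorem lisFrom_eq_card {s₀ : Finset (Fin n)} (h₀ : IncreasingFrom w i s₀)
    (hmax : ∀ s, IncreasingFrom w i s → s ⊆ s₀) : lisFrom w i = #s₀ :=
  (lisFrom_le fun s hs => card_le_card (hmax s hs)).antisymm (card_le_lisFrom h₀)

theorem lisFrom_le_sub : lisFrom w i ≤ n - i :=
  lisFrom_le fun _ hs =>
    (card_le_card fun j hj => mem_Ici.mpr (hs.2.1 j hj)).trans (Fin.card_Ici i).le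

theorem IncreasingFrom.image {s : Finset (Fin n)} (hs : IncreasingFrom w i s) :
    IncreasingFrom w⁻¹ (w i) (s.image w) := by
  obtain ⟨hi, hge, hinc⟩ := hs
  refine ⟨mem_image_of_mem w hi, ?_, ?_⟩
  · intro v hv
    obtain ⟨j, hj, rfl⟩ := mem_image.mp hv
    rcases (hge j hj).lt_or_eq with h | rfl
    · exact (hinc i hi j hj h).le
    · rfl
  · intro v hv v' hv' hjk
    obtain ⟨j, hj, rfl⟩ := mem_image.mp hv
    obtain ⟨k, hk, rfl⟩ := mem_image.mp hv'
    simp only [Equiv.Perm.inv_def, Equiv.symm_apply_apply]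
    by_contra! hkj
    rcases hkj.lt_or_eq with h | rfl
    · exact (hinc k hk j hj h).not_gt hjk
    · exact hjk.false

theorem lisFrom_le_lisFrom_inv_apply : lisFrom w i ≤ lisFrom w⁻¹ (w i) :=
  lisFrom_le fun s hs => (card_image_of_injective s w.injective).ge.trans (card_le_lisFrom hs.image)

theorem lisFrom_inv_apply : lisFrom w⁻¹ (w i) = lisFrom w i :=
  le_antisymm (by simpa using lisFrom_le_lisFrom_inv_apply (w := w⁻¹) (i := w i))
    lisFrom_le_lisFrom_inv_apply

theorem eps_add_lisFrom : eps w i + lisFrom w i = n + 1 := by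
  have := lisFrom_le_sub (w := w) (i := i)
  have := i.isLt
  unfold eps rajCode
  omega

theorem eps_inv_apply : eps w⁻¹ (w i) = eps w i := by
  have h := eps_add_lisFrom (w := w⁻¹) (i := w i)
  rw [lisFrom_inv_apply] at h
  have := eps_add_lisFrom (w := w) (i := i)
  omega

end LisFrom

theorem shape_inv (w : Equiv.Perm (Fin n)) : shape w⁻¹ = shape w :=
  funext fun _ => card_equiv w.symm fun v => by
    simp only [mem_filter, mem_univ, true_and, ← eps_inv_apply (w := w), Equiv.apply_symm_apply,
      Equiv.Perm.inv_def]

/-- `valleyKey E ∘ w` is strictly monotone exactly when `w` lists the values outside `E` in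
decreasing order and then those in `E` in increasing order (`0` may sit on either side); these are
the valley permutations. -/
def valleyKey (E : Finset (Fin n)) (v : Fin n) : ℕ := if v ∈ E then n + v else n - v

def countAbove (E : Finset (Fin n)) (v : Fin n) : ℕ := #{e ∈ E | v < e}

section ValleyKey

variable {E : Finset (Fin n)} {w : Equiv.Perm (Fin n)}

theorem valleyKey_of_mem {v : Fin n} (h : v ∈ E) : valleyKey E v = n + v := if_pos h

theorem valleyKey_of_notMem {v : Fin n} (h : v ∉ E) : valleyKey E v = n - v := if_neg h

theorem sub_le_valleyKey (v : Fin n) : n - v ≤ valleyKey E v := by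
  unfold valleyKey; split_ifs <;> omega

theorem valleyKey_le_add (v : Fin n) : valleyKey E v ≤ n + v := by
  unfold valleyKey; split_ifs <;> omega

theorem valleyKey_eq_sub_of_le {v : Fin n} (h : valleyKey E v ≤ n) : valleyKey E v = n - v := by
  unfold valleyKey at *; split_ifs at * <;> omega

theorem valleyKey_eq_add_of_ge {v : Fin n} (h : n ≤ valleyKey E v) : valleyKey E v = n + v := by
  unfold valleyKey at *; split_ifs at * <;> omega

theorem valleyKey_injective (E : Finset (Fin n)) : Function.Injective (valleyKey E) := by
  intro v v' h
  have := v.isLt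
  have := v'.isLt
  unfold valleyKey at h
  ext
  split_ifs at h <;> omega

theorem strictMono_valleyKey_sort (E : Finset (Fin n)) :
    StrictMono (valleyKey E ∘ Tuple.sort (valleyKey E)) :=
  (Tuple.monotone_sort _).strictMono_of_injective ((valleyKey_injective E).comp (Equiv.injective _))

theorem eq_sort_valleyKey_of_strictMono (h : StrictMono (valleyKey E ∘ w)) :
    w = Tuple.sort (valleyKey E) :=
  Tuple.eq_sort_iff.mpr ⟨h.monotone, fun _ _ hij heq => absurd heq (h hij).ne⟩

theorem Valley.exists_strictMono_valleyKey (hw : Valley w) :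
    ∃ E : Finset (Fin n), StrictMono (valleyKey E ∘ w) := by
  obtain ⟨a, hdec, hinc⟩ := hw
  refine ⟨({v | a ≤ (w⁻¹ v : ℕ)} : Finset (Fin n)), fun i j hij => ?_⟩
  have hij' : (i : ℕ) < j := hij
  have hne : (w i : ℕ) ≠ w j := Fin.val_ne_of_ne (w.injective.ne hij.ne)
  have := (w i).isLt
  simp only [Function.comp_apply, valleyKey, mem_filter, mem_univ, true_and,
    Equiv.Perm.coe_inv, Equiv.symm_apply_apply]
  split_ifs with hi hj hj
  · have : (w i : ℕ) < w j := hinc i j hi hij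
    omega
  · omega
  · omega
  · have : (w j : ℕ) < w i := hdec i j hij (by omega)
    omega

theorem valley_of_strictMono_valleyKey (h : StrictMono (valleyKey E ∘ w)) : Valley w := by
  rcases isEmpty_or_nonempty (Fin n) with _ | ⟨⟨z, hz⟩⟩
  · exact ⟨0, fun i => isEmptyElim i, fun i => isEmptyElim i⟩
  set b := w⁻¹ ⟨0, by omega⟩
  have hb : valleyKey E (w b) = n := by simp [b, valleyKey]
  refine ⟨b, fun i j hij hjb => ?_, fun i j hbi hij => ?_⟩
  · have hj : valleyKey E (w j) ≤ valleyKey E (w b) := h.monotone (show j ≤ b from hjb)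
    rw [hb] at hj
    have hij' : valleyKey E (w i) < valleyKey E (w j) := h hij
    rw [valleyKey_eq_sub_of_le (hij'.trans_le hj).le, valleyKey_eq_sub_of_le hj] at hij'
    have := (w i).isLt
    exact Fin.lt_def.mpr (by omega)
  · have hi : valleyKey E (w b) ≤ valleyKey E (w i) := h.monotone (show b ≤ i from hbi)
    rw [hb] at hi
    have hij' : valleyKey E (w i) < valleyKey E (w j) := h hij
    rw [valleyKey_eq_add_of_ge (hi.trans hij'.le), valleyKey_eq_add_of_ge hi] at hij'
    exact Fin.lt_def.mpr (by omega)

theorem lt_of_apply_mem_of_apply_lt (h : StrictMono (valleyKey E ∘ w)) {i j : Fin n}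
    (hj : w j ∈ E) (hij : w i < w j) : i < j := by
  refine h.lt_iff_lt.mp ((valleyKey_le_add (w i)).trans_lt ?_)
  simp only [Function.comp_apply, valleyKey_of_mem hj]
  exact Nat.add_lt_add_left hij n

theorem apply_lt_apply_of_mem (h : StrictMono (valleyKey E ∘ w)) {j k : Fin n} (hj : w j ∈ E)
    (hk : w k ∈ E) (hjk : j < k) : w j < w k := by
  have : valleyKey E (w j) < valleyKey E (w k) := h hjk
  rw [valleyKey_of_mem hj, valleyKey_of_mem hk] at this
  exact Fin.lt_def.mpr (by omega)

theorem apply_mem_of_lt_of_apply_lt (h : StrictMono (valleyKey E ∘ w)) {i j : Fin n}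
    (hij : i < j) (hw : w i < w j) : w j ∈ E := by
  by_contra hj
  have : valleyKey E (w i) < valleyKey E (w j) := h hij
  rw [valleyKey_of_notMem hj] at this
  have := sub_le_valleyKey (E := E) (w i)
  have := (w j).isLt
  have : (w i : ℕ) < w j := hw
  omega

theorem lisFrom_eq_countAbove (h : StrictMono (valleyKey E ∘ w)) (i : Fin n) :
    lisFrom w i = countAbove E (w i) + 1 := by
  set T : Finset (Fin n) := {j | w j ∈ E ∧ w i < w j}
  have memT {j : Fin n} : j ∈ T ↔ w j ∈ E ∧ w i < w j := by simp [T]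
  have hT : #T = countAbove E (w i) := card_equiv w fun j => by simp [T]
  have hiT : i ∉ T := fun hi => (memT.mp hi).2.false
  have lt_of_mem {j : Fin n} (hj : j ∈ T) : i < j :=
    lt_of_apply_mem_of_apply_lt h (memT.mp hj).1 (memT.mp hj).2
  rw [lisFrom_eq_card (s₀ := insert i T), card_insert_of_notMem hiT, hT]
  · refine ⟨mem_insert_self i T, fun j hj => ?_, fun j hj k hk hjk => ?_⟩
    · rcases mem_insert.mp hj with rfl | hj
      · rfl
      · exact (lt_of_mem hj).le
    · rcases mem_insert.mp hj with rfl | hj <;> rcases mem_insert.mp hk with rfl | hk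
      · exact absurd hjk (lt_irrefl _)
      · exact (memT.mp hk).2
      · exact absurd (lt_of_mem hj) hjk.not_gt
      · exact apply_lt_apply_of_mem h (memT.mp hj).1 (memT.mp hk).1 hjk
  · rintro s ⟨hi, hge, hinc⟩ j hj
    rcases (hge j hj).lt_or_eq with hij | rfl
    · have hw := hinc i hi j hj hij
      exact mem_insert_of_mem (memT.mpr ⟨apply_mem_of_lt_of_apply_lt h hij hw, hw⟩)
    · exact mem_insert_self _ T

theorem lisFrom_inv_eq_countAbove (h : StrictMono (valleyKey E ∘ w)) (v : Fin n) :
    lisFrom w⁻¹ v = countAbove E v + 1 := by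
  simpa using (lisFrom_inv_apply (i := w⁻¹ v)).trans (lisFrom_eq_countAbove h _)

theorem shape_eq_card_countAbove (h : StrictMono (valleyKey E ∘ w)) (k : Fin n) :
    shape w k = #{v | countAbove E v + k + 1 = n} := by
  rw [← shape_inv]
  refine congrArg card (filter_congr fun v _ => ?_)
  have := eps_add_lisFrom (w := w⁻¹) (i := v)
  rw [lisFrom_inv_eq_countAbove h] at this
  omega

end ValleyKey

theorem eq_of_antitone_of_card_fiber {β : Type*} [PartialOrder β] [DecidableEq β]
    {f g : Fin n → β} (hf : Antitone f) (hg : Antitone g)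
    (h : ∀ m, #{i | f i = m} = #{i | g i = m}) : f = g := by
  let σ : Equiv.Perm (Fin n) := Equiv.ofFiberEquiv (f := f) (g := g) fun m =>
    Fintype.equivOfCardEq (by simpa only [Fintype.card_subtype] using h m)
  have hσ : g ∘ σ = f := funext (Equiv.ofFiberEquiv_map _)
  simpa [hσ] using Tuple.unique_antitone (f := g) (σ := σ) (τ := 1) (hσ ▸ hf) hg

section CountAbove

variable {E E' : Finset (Fin n)} {w w' : Equiv.Perm (Fin n)}

theorem antitone_countAbove (E : Finset (Fin n)) : Antitone (countAbove E) := fun _ _ hvv' =>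
  card_le_card fun _ he => by
    simp only [mem_filter] at he ⊢
    exact ⟨he.1, hvv'.trans_lt he.2⟩

theorem countAbove_lt (E : Finset (Fin n)) (v : Fin n) : countAbove E v < n := by
  have : countAbove E v ≤ #(Ioi v) := card_le_card fun e he => mem_Ioi.mpr (mem_filter.mp he).2
  rw [Fin.card_Ioi] at this
  omega

theorem countAbove_eq_of_shape_eq (hw : StrictMono (valleyKey E ∘ w))
    (hw' : StrictMono (valleyKey E' ∘ w')) (hs : shape w = shape w') :
    countAbove E = countAbove E' := by
  have fiber {F : Finset (Fin n)} {u : Equiv.Perm (Fin n)} (hu : StrictMono (valleyKey F ∘ u))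
      (m : ℕ) : #{v | countAbove F v = m} =
        if hm : m < n then shape u ⟨n - 1 - m, by omega⟩ else 0 := by
    split_ifs with hm
    · rw [shape_eq_card_countAbove hu]
      exact congrArg card (filter_congr fun v _ => by dsimp only; omega)
    · exact card_eq_zero.mpr (filter_eq_empty_iff.mpr fun v _ => by
        have := countAbove_lt F v
        omega)
  refine eq_of_antitone_of_card_fiber (antitone_countAbove E) (antitone_countAbove E') fun m => ?_
  rw [fiber hw, fiber hw', hs]

theorem countAbove_eq_add_ite {u v : Fin n} (huv : (u : ℕ) + 1 = v) :
    countAbove E u = countAbove E v + if v ∈ E then 1 else 0 := by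
  have : ({e ∈ E | u < e} : Finset (Fin n)) = {e ∈ E | v < e} ∪ {e ∈ E | e = v} := by
    ext e
    by_cases he : e ∈ E <;> simp only [mem_filter, mem_union, he, true_and, false_and, or_false,
      Fin.lt_def, Fin.ext_iff]
    omega
  rw [countAbove, this, card_union_of_disjoint (disjoint_filter.mpr fun _ _ h1 h2 => by
    subst h2; exact lt_irrefl _ h1), filter_eq']
  split_ifs <;> simp [countAbove]

theorem valleyKey_eq_of_countAbove_eq (h : countAbove E = countAbove E') :
    valleyKey E = valleyKey E' := by
  funext v
  obtain ⟨_ | u, hv⟩ := v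
  · simp [valleyKey]
  · have hu : (⟨u, by omega⟩ : Fin n).val + 1 = (⟨u + 1, hv⟩ : Fin n).val := rfl
    have := countAbove_eq_add_ite (E := E) hu
    rw [h, countAbove_eq_add_ite (E := E') hu] at this
    have hmem : (⟨u + 1, hv⟩ : Fin n) ∈ E ↔ (⟨u + 1, hv⟩ : Fin n) ∈ E' := by
      split_ifs at this <;> simp_all
    simp only [valleyKey, hmem]

theorem eq_of_strictMono_valleyKey_of_shape_eq (hw : StrictMono (valleyKey E ∘ w))
    (hw' : StrictMono (valleyKey E' ∘ w')) (hs : shape w = shape w') : w = w' := by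
  rw [eq_sort_valleyKey_of_strictMono hw, eq_sort_valleyKey_of_strictMono hw',
    valleyKey_eq_of_countAbove_eq (countAbove_eq_of_shape_eq hw hw' hs)]

end CountAbove

theorem Valley.eq_of_shape_eq {w w' : Equiv.Perm (Fin n)} (hw : Valley w) (hw' : Valley w')
    (hs : shape w = shape w') : w = w' := by
  obtain ⟨E, hE⟩ := hw.exists_strictMono_valleyKey
  obtain ⟨E', hE'⟩ := hw'.exists_strictMono_valleyKey
  exact eq_of_strictMono_valleyKey_of_shape_eq hE hE' hs

def prefixSum (α : Fin n → ℕ) (m : ℕ) : ℕ :=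
  ∑ j ∈ univ.filter (fun j : Fin n => (j : ℕ) < m), α j

section PrefixSum

variable {α : Fin n → ℕ} {p : ℕ}

theorem prefixSum_mono (α : Fin n → ℕ) : Monotone (prefixSum α) := fun _ _ h =>
  sum_le_sum_of_subset fun j hj => by
    simp only [mem_filter, mem_univ, true_and] at hj ⊢
    omega

theorem prefixSum_succ (k : Fin n) : prefixSum α (k + 1) = prefixSum α k + α k := by
  have : univ.filter (fun j : Fin n => (j : ℕ) < k + 1) =
      insert k (univ.filter fun j : Fin n => (j : ℕ) < k) := by
    ext j
    simp only [mem_filter, mem_univ, true_and, mem_insert, Fin.ext_iff]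
    omega
  rw [prefixSum, this, sum_insert (by simp), add_comm, prefixSum]

theorem prefixSum_self (hsum : ∑ k, α k = n) : prefixSum α n = n := by
  simpa [prefixSum] using hsum

theorem lt_of_prefixSum_pos (hα : ∀ k, 1 ≤ α k ↔ p ≤ k) {m : ℕ} (h : 0 < prefixSum α m) :
    p < m := by
  by_contra! hm
  refine h.ne' (sum_eq_zero fun j hj => ?_)
  have hj : ¬ p ≤ (j : ℕ) := by
    simp only [mem_filter, mem_univ, true_and] at hj
    omega
  have := (hα j).not.mpr hj
  omega

theorem prefixSum_lt_prefixSum (hα : ∀ k, 1 ≤ α k ↔ p ≤ k) {j : Fin n} (hj : p ≤ j) {m : ℕ}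
    (hjm : (j : ℕ) < m) : prefixSum α j < prefixSum α m :=
  calc prefixSum α j < prefixSum α j + α j := by have := (hα j).mpr hj; omega
    _ = prefixSum α (j + 1) := (prefixSum_succ j).symm
    _ ≤ prefixSum α m := prefixSum_mono α hjm

def blockStarts (α : Fin n → ℕ) : Finset (Fin n) := {e : Fin n | ∃ j : Fin n, prefixSum α j = e}

theorem countAbove_blockStarts (hsum : ∑ k, α k = n) (hα : ∀ k, 1 ≤ α k ↔ p ≤ k)
    (v : Fin n) : countAbove (blockStarts α) v = #{j : Fin n | v < prefixSum α j} := by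
  have lt_of_mem {j : Fin n} (hj : j ∈ ({j : Fin n | v < prefixSum α j} : Finset (Fin n))) :
      p < j := lt_of_prefixSum_pos hα (by simp only [mem_filter] at hj; omega)
  symm
  refine card_bij (fun j hj => ⟨prefixSum α j, ?_⟩) (fun j hj => ?_) (fun j hj j' hj' hjj' => ?_)
    (fun e he => ?_)
  · exact (prefixSum_lt_prefixSum hα (lt_of_mem hj).le (Fin.is_lt j)).trans_eq (prefixSum_self hsum)
  · simp only [mem_filter, mem_univ, true_and] at hj ⊢
    exact ⟨by simp [blockStarts], Fin.lt_def.mpr hj⟩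
  · have hjj' : prefixSum α j = prefixSum α j' := congrArg Fin.val hjj'
    by_contra hne
    rcases lt_or_gt_of_ne hne with h | h
    · exact (prefixSum_lt_prefixSum hα (lt_of_mem hj).le h).ne hjj'
    · exact (prefixSum_lt_prefixSum hα (lt_of_mem hj').le h).ne' hjj'
  · simp only [blockStarts, mem_filter, mem_univ, true_and] at he
    obtain ⟨⟨j, hj⟩, hve⟩ := he
    exact ⟨j, by simp only [mem_filter, mem_univ, true_and, hj]; exact hve, Fin.ext hj⟩

theorem countAbove_blockStarts_add_eq_iff (hsum : ∑ k, α k = n) (hα : ∀ k, 1 ≤ α k ↔ p ≤ k)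
    (k v : Fin n) : countAbove (blockStarts α) v + k + 1 = n ↔
      prefixSum α k ≤ v ∧ v < prefixSum α (k + 1) := by
  have hκ : countAbove (blockStarts α) v + #{j : Fin n | prefixSum α j ≤ v} = n := by
    rw [countAbove_blockStarts hsum hα]
    simpa using card_filter_add_card_filter_not (s := univ)
      (fun j : Fin n => (v : ℕ) < prefixSum α j)
  have hlt (m : Fin n) : m < #{j : Fin n | prefixSum α j ≤ v} ↔ prefixSum α m ≤ v :=
    Tuple.lt_card_le_iff_apply_le_of_monotone fun _ _ h => prefixSum_mono α h
  have := hlt k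
  by_cases hk : (k : ℕ) + 1 < n
  · have := hlt ⟨k + 1, hk⟩
    dsimp only at this
    omega
  · have : #{j : Fin n | prefixSum α j ≤ v} ≤ n := (card_le_univ _).trans_eq (Fintype.card_fin n)
    have : prefixSum α (k + 1) = n := by rw [show (k : ℕ) + 1 = n by omega, prefixSum_self hsum]
    omega

theorem card_countAbove_blockStarts (hsum : ∑ k, α k = n) (hα : ∀ k, 1 ≤ α k ↔ p ≤ k)
    (k : Fin n) : #{v | countAbove (blockStarts α) v + k + 1 = n} = α k := by
  have hsub : univ.filter (fun v : Fin n => (v : ℕ) < prefixSum α k) ⊆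
      univ.filter (fun v : Fin n => (v : ℕ) < prefixSum α (k + 1)) := fun v hv => by
    simp only [mem_filter, mem_univ, true_and] at hv ⊢
    exact hv.trans_le (prefixSum_mono α (Nat.le_succ k))
  have hfiber : ({v | countAbove (blockStarts α) v + k + 1 = n} : Finset (Fin n)) =
      univ.filter (fun v : Fin n => (v : ℕ) < prefixSum α (k + 1)) \
        univ.filter (fun v : Fin n => (v : ℕ) < prefixSum α k) := by
    ext v
    simp [countAbove_blockStarts_add_eq_iff hsum hα, and_comm]
  have := prefixSum_mono α (show (k : ℕ) + 1 ≤ n by omega)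
  rw [prefixSum_self hsum, prefixSum_succ] at this
  rw [hfiber, card_sdiff_of_subset hsub, Fin.card_filter_val_lt, Fin.card_filter_val_lt,
    prefixSum_succ]
  omega

end PrefixSum

theorem exists_valley_shape_eq {α : Fin n → ℕ} {p : ℕ} (hsum : ∑ k, α k = n)
    (hα : ∀ k, 1 ≤ α k ↔ p ≤ k) : ∃ f : Equiv.Perm (Fin n), Valley f ∧ shape f = α := by
  have h := strictMono_valleyKey_sort (blockStarts α)
  exact ⟨_, valley_of_strictMono_valleyKey h, funext fun k =>
    (shape_eq_card_countAbove h k).trans (card_countAbove_blockStarts hsum hα k)⟩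

/-- For a composition `α` of `n` whose support is an upper interval
(`α_k ≥ 1` exactly when `t ≤ k ≤ n` in 1-based indexing), there is exactly one valley
permutation of shape `α`, and exactly one inverse valley permutation of shape `α`,
namely its inverse. -/
theorem existsUnique_valley_of_shape (n : ℕ) (α : Fin n → ℕ)
    (hsum : ∑ k, α k = n)
    (hsupp : ∃ t : ℕ, ∀ k : Fin n, 1 ≤ α k ↔ t ≤ (k : ℕ) + 1) :
    (∃! f : Equiv.Perm (Fin n), Valley f ∧ shape f = α) ∧
    ∀ f : Equiv.Perm (Fin n), Valley f → shape f = α →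
      ∀ g : Equiv.Perm (Fin n), (Valley g⁻¹ ∧ shape g = α) ↔ g = f⁻¹ := by
  obtain ⟨t, ht⟩ := hsupp
  obtain ⟨f, hf, hfα⟩ := exists_valley_shape_eq hsum (p := t - 1) fun k => by rw [ht k]; omega
  refine ⟨⟨f, ⟨hf, hfα⟩, fun g ⟨hg, hgα⟩ => hg.eq_of_shape_eq hf (hgα.trans hfα.symm)⟩,
    fun f hf hfα g => ⟨fun ⟨hg, hgα⟩ => ?_, ?_⟩⟩
  · rw [← inv_inv g, hg.eq_of_shape_eq hf ((shape_inv g).trans (hgα.trans hfα.symm))]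
  · rintro rfl
    exact ⟨by rwa [inv_inv], (shape_inv f).trans hfα⟩

end RajRegularity
end
end
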